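/- A pair (d, D) of linear maps on V is a biderivation of the Leibniz algebra L₁₉ if and only if there exist complex numbers a, b, m, m', p, q, r, s, u, v, w, z such that d(e₁) = a·e₁ + p·e₃ + q·e₄, d(e₂) = m·e₁ + b·e₂ + r·e₃ + s·e₄, d(e₃) = 2b·e₃ + m·e₄, d(e₄) = (a+b)·e₄, D(e₁) = u·e₃ + v·e₄, D(e₂) = m'·e₁ + b·e₂ + w·e₃ + z·e₄, and D(e₃) = D(e₄) = 0. Consequently, the space of biderivations of L₁₉ is a 12-dimensional linear subspace of End(V) × End(V). -/

import Mathlib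

/-- `V = ℂ⁴`. -/
abbrev V : Type := Fin 4 → ℂ

/-- standard basis: `e 0 = e₁`, ..., `e 3 = e₄`. -/
def e (i : Fin 4) : V := Pi.single i 1

/-- Bracket of the Leibniz algebra `L₁₉`:
`⟦e₂,e₁⟧ = e₄`, `⟦e₂,e₂⟧ = e₃`, all other basis products zero. -/
def br (x y : V) : V :=
  (x 1 * y 1) • e 2 + (x 1 * y 0) • e 3

/-- A derivation. -/
def IsDer (d : V →ₗ[ℂ] V) : Prop :=
  ∀ x y : V, d (br x y) = br (d x) y + br x (d y)

/-- An antiderivation. -/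
def IsAntiDer (D : V →ₗ[ℂ] V) : Prop :=
  ∀ x y : V, D (br x y) = br x (D y) - br y (D x)

/-- A biderivation: a pair of a derivation and an antiderivation satisfying
`⟦d(x),y⟧ = ⟦D(x),y⟧` for all `x, y`. -/
def IsBider (d D : V →ₗ[ℂ] V) : Prop :=
  IsDer d ∧ IsAntiDer D ∧ ∀ x y : V, br (d x) y = br (D x) y

/-! Since `⟦x, y⟧ = x₂ • (y₂ • e₃ + y₁ • e₄)` only sees the second coordinate of `x`, the condition
`⟦d x, y⟧ = ⟦D x, y⟧` just says that `d x` and `D x` have the same second coordinate. Testing the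
derivation and antiderivation identities on the pairs `(e₁, e₂)`, `(e₂, e₂)`, `(e₂, e₁)` already
forces the stated shape of `d` and `D`, and maps of that shape satisfy the identities by direct
computation. The twelve free parameters are the coordinates of an injective linear map
`ℂ¹² → End V × End V` whose range is the set of biderivations. -/

lemma e_apply (i j : Fin 4) : e i j = if j = i then 1 else 0 := by
  simp [e, Pi.single_apply]

lemma eq_sum_smul_e (x : V) : x = x 0 • e 0 + x 1 • e 1 + x 2 • e 2 + x 3 • e 3 := by
  funext j; fin_cases j <;> simp [e_apply]

lemma map_eq_sum_smul_map_e (f : V →ₗ[ℂ] V) (x : V) :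
    f x = x 0 • f (e 0) + x 1 • f (e 1) + x 2 • f (e 2) + x 3 • f (e 3) := by
  conv_lhs => rw [eq_sum_smul_e x]
  simp only [map_add, map_smul]

lemma linearMap_ext_e {f g : V →ₗ[ℂ] V} (h : ∀ i, f (e i) = g (e i)) : f = g :=
  LinearMap.ext fun x => by
    rw [map_eq_sum_smul_map_e f, map_eq_sum_smul_map_e g, h 0, h 1, h 2, h 3]

lemma forall_br_eq_br_iff (x x' : V) : (∀ y, br x y = br x' y) ↔ x 1 = x' 1 := by
  refine ⟨fun h => ?_, fun h y => by rw [br, br, h]⟩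
  simpa [br, e_apply] using congrFun (h (e 1)) 2

lemma isDer_iff (d : V →ₗ[ℂ] V) : IsDer d ↔
    d (e 0) 1 = 0 ∧
    d (e 2) = (2 * d (e 1) 1) • e 2 + d (e 1) 0 • e 3 ∧
    d (e 3) = (d (e 0) 0 + d (e 1) 1) • e 3 := by
  constructor
  · intro hd
    have h01 : d (e 0) 1 = 0 := by simpa [br, e_apply] using (congrFun (hd (e 0) (e 1)) 2).symm
    have h2 : d (e 2) = d (e 1) 1 • e 2 + (d (e 1) 1 • e 2 + d (e 1) 0 • e 3) := by
      simpa [br, e_apply] using hd (e 1) (e 1)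
    have h3 : d (e 3) = d (e 1) 1 • e 3 + (d (e 0) 1 • e 2 + d (e 0) 0 • e 3) := by
      simpa [br, e_apply] using hd (e 1) (e 0)
    exact ⟨h01, by rw [h2]; module, by rw [h3, h01]; module⟩
  · rintro ⟨h01, h2, h3⟩ x y
    rw [br, map_add, map_smul, map_smul, h2, h3, map_eq_sum_smul_map_e d x,
      map_eq_sum_smul_map_e d y, h2, h3]
    funext i
    fin_cases i <;> simp [br, e_apply, h01] <;> ring

lemma isAntiDer_iff (D : V →ₗ[ℂ] V) : IsAntiDer D ↔
    D (e 0) 0 = 0 ∧ D (e 0) 1 = 0 ∧ D (e 2) = 0 ∧ D (e 3) = 0 := by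
  constructor
  · intro hD
    have h00 : D (e 0) 0 = 0 := by simpa [br, e_apply] using congrFun (hD (e 0) (e 1)) 3
    have h01 : D (e 0) 1 = 0 := by simpa [br, e_apply] using congrFun (hD (e 0) (e 1)) 2
    have h2 : D (e 2) = 0 := by simpa [br, e_apply] using hD (e 1) (e 1)
    have h3 : D (e 3) = 0 := by simpa [br, e_apply, h00, h01] using hD (e 1) (e 0)
    exact ⟨h00, h01, h2, h3⟩
  · rintro ⟨h00, h01, h2, h3⟩ x y
    rw [br, map_add, map_smul, map_smul, h2, h3, map_eq_sum_smul_map_e D x,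
      map_eq_sum_smul_map_e D y, h2, h3]
    funext i
    fin_cases i <;> simp [br, e_apply, h00, h01] <;> ring

lemma forall_br_map_eq_br_map_iff (d D : V →ₗ[ℂ] V) :
    (∀ x y, br (d x) y = br (D x) y) ↔ ∀ x, d x 1 = D x 1 :=
  forall_congr' fun x => forall_br_eq_br_iff (d x) (D x)

lemma isBider_iff (d D : V →ₗ[ℂ] V) : IsBider d D ↔ ∃ a b m m' p q r s u v w z : ℂ,
      d (e 0) = a • e 0 + p • e 2 + q • e 3 ∧
      d (e 1) = m • e 0 + b • e 1 + r • e 2 + s • e 3 ∧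
      d (e 2) = (2 * b) • e 2 + m • e 3 ∧
      d (e 3) = (a + b) • e 3 ∧
      D (e 0) = u • e 2 + v • e 3 ∧
      D (e 1) = m' • e 0 + b • e 1 + w • e 2 + z • e 3 ∧
      D (e 2) = 0 ∧ D (e 3) = 0 := by
  rw [IsBider, isDer_iff, isAntiDer_iff, forall_br_map_eq_br_map_iff]
  constructor
  · rintro ⟨⟨h01, h2, h3⟩, ⟨g00, g01, g2, g3⟩, hc⟩
    have g11 : D (e 1) 1 = d (e 1) 1 := (hc (e 1)).symm
    refine ⟨d (e 0) 0, d (e 1) 1, d (e 1) 0, D (e 1) 0, d (e 0) 2, d (e 0) 3, d (e 1) 2,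
      d (e 1) 3, D (e 0) 2, D (e 0) 3, D (e 1) 2, D (e 1) 3, ?_, ?_, h2, h3, ?_, ?_, g2, g3⟩ <;>
    · funext i; fin_cases i <;> simp [e_apply, h01, g00, g01, g11]
  · rintro ⟨a, b, m, m', p, q, r, s, u, v, w, z, h0, h1, h2, h3, g0, g1, g2, g3⟩
    have ha : d (e 0) 0 = a := by simp [h0, e_apply]
    have hb : d (e 1) 1 = b := by simp [h1, e_apply]
    have hm : d (e 1) 0 = m := by simp [h1, e_apply]
    refine ⟨⟨by simp [h0, e_apply], by rw [h2, hb, hm], by rw [h3, ha, hb]⟩,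
      ⟨by simp [g0, e_apply], by simp [g0, e_apply], g2, g3⟩, fun x => ?_⟩
    rw [map_eq_sum_smul_map_e d x, map_eq_sum_smul_map_e D x]
    simp [h0, h1, h2, h3, g0, g1, g2, g3, e_apply]

-- The parameter vector is `![a, b, m, m', p, q, r, s, u, v, w, z]`.
noncomputable def biderivationOfParams :
    (Fin 12 → ℂ) →ₗ[ℂ] (V →ₗ[ℂ] V) × (V →ₗ[ℂ] V) where
  toFun c :=
    (Matrix.toLin' !![c 0, c 2, 0, 0; 0, c 1, 0, 0; c 4, c 6, 2 * c 1, 0; c 5, c 7, c 2, c 0 + c 1],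
     Matrix.toLin' !![0, c 3, 0, 0; 0, c 1, 0, 0; c 8, c 10, 0, 0; c 9, c 11, 0, 0])
  map_add' c c' := by
    simp only [← map_add, Prod.mk_add_mk]
    congr 2 <;> ext i j <;> fin_cases i <;> fin_cases j <;> simp [mul_add, add_add_add_comm]
  map_smul' t c := by
    simp only [← map_smul, Prod.smul_mk]
    congr 2 <;> ext i j <;> fin_cases i <;> fin_cases j <;> simp [mul_add, mul_left_comm]

lemma biderivationOfParams_apply_e (c : Fin 12 → ℂ) :
    (biderivationOfParams c).1 (e 0) = c 0 • e 0 + c 4 • e 2 + c 5 • e 3 ∧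
    (biderivationOfParams c).1 (e 1) = c 2 • e 0 + c 1 • e 1 + c 6 • e 2 + c 7 • e 3 ∧
    (biderivationOfParams c).1 (e 2) = (2 * c 1) • e 2 + c 2 • e 3 ∧
    (biderivationOfParams c).1 (e 3) = (c 0 + c 1) • e 3 ∧
    (biderivationOfParams c).2 (e 0) = c 8 • e 2 + c 9 • e 3 ∧
    (biderivationOfParams c).2 (e 1) = c 3 • e 0 + c 1 • e 1 + c 10 • e 2 + c 11 • e 3 ∧
    (biderivationOfParams c).2 (e 2) = 0 ∧ (biderivationOfParams c).2 (e 3) = 0 := by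
  refine ⟨?_, ?_, ?_, ?_, ?_, ?_, ?_, ?_⟩ <;>
  · funext i
    fin_cases i <;> simp [biderivationOfParams, e]

lemma biderivationOfParams_injective : Function.Injective biderivationOfParams :=
  Function.LeftInverse.injective (g := fun P => ![P.1 (e 0) 0, P.1 (e 1) 1, P.1 (e 1) 0,
    P.2 (e 1) 0, P.1 (e 0) 2, P.1 (e 0) 3, P.1 (e 1) 2, P.1 (e 1) 3, P.2 (e 0) 2, P.2 (e 0) 3,
    P.2 (e 1) 2, P.2 (e 1) 3]) fun c => by
  funext k
  fin_cases k <;> simp [biderivationOfParams, e]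

lemma coe_range_biderivationOfParams :
    (LinearMap.range biderivationOfParams : Set ((V →ₗ[ℂ] V) × (V →ₗ[ℂ] V))) =
      {P | IsBider P.1 P.2} := by
  ext P
  rw [SetLike.mem_coe, LinearMap.mem_range, Set.mem_ofPred_eq, isBider_iff]
  constructor
  · rintro ⟨c, rfl⟩
    exact ⟨c 0, c 1, c 2, c 3, c 4, c 5, c 6, c 7, c 8, c 9, c 10, c 11,
      biderivationOfParams_apply_e c⟩
  · rintro ⟨a, b, m, m', p, q, r, s, u, v, w, z, h0, h1, h2, h3, g0, g1, g2, g3⟩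
    let c : Fin 12 → ℂ := ![a, b, m, m', p, q, r, s, u, v, w, z]
    obtain ⟨k0, k1, k2, k3, l0, l1, l2, l3⟩ := biderivationOfParams_apply_e c
    refine ⟨c, Prod.ext (linearMap_ext_e fun i => ?_) (linearMap_ext_e fun i => ?_)⟩ <;> fin_cases i
    exacts [k0.trans h0.symm, k1.trans h1.symm, k2.trans h2.symm, k3.trans h3.symm,
      l0.trans g0.symm, l1.trans g1.symm, l2.trans g2.symm, l3.trans g3.symm]

theorem biderivations_of_L19 :
    (∀ d D : V →ₗ[ℂ] V, IsBider d D ↔ ∃ a b m m' p q r s u v w z : ℂ,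
      d (e 0) = a • e 0 + p • e 2 + q • e 3 ∧
      d (e 1) = m • e 0 + b • e 1 + r • e 2 + s • e 3 ∧
      d (e 2) = (2 * b) • e 2 + m • e 3 ∧
      d (e 3) = (a + b) • e 3 ∧
      D (e 0) = u • e 2 + v • e 3 ∧
      D (e 1) = m' • e 0 + b • e 1 + w • e 2 + z • e 3 ∧
      D (e 2) = 0 ∧ D (e 3) = 0) ∧
    ∃ S : Submodule ℂ ((V →ₗ[ℂ] V) × (V →ₗ[ℂ] V)),
      (S : Set ((V →ₗ[ℂ] V) × (V →ₗ[ℂ] V))) = {p | IsBider p.1 p.2} ∧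
      Module.finrank ℂ S = 12 := by
  refine ⟨isBider_iff, LinearMap.range biderivationOfParams, coe_range_biderivationOfParams, ?_⟩
  rw [LinearMap.finrank_range_of_inj biderivationOfParams_injective, Module.finrank_fin_fun]
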